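/- arXiv:1111.2299 — 6 statements merged into one kernel-verified Lean document; each statement's English description precedes it below -/
import Mathlib

section
/- Let D be a positive integer. (1) If D ≡ 5 (mod 8), then there are no integers e, w, h with w ≥ 1, h ≥ 1 and D = e² + 8wh; in particular the prototype set 𝒫_D is empty. (2) If D ≥ 17 and D ≡ 0, 1 or 4 (mod 8), then 𝒫_D is nonempty; explicitly, (D/8, 1, 0, 0) ∈ 𝒫_D when D ≡ 0 (mod 8), ((D−1)/8, 1, 0, −1) ∈ 𝒫_D when D ≡ 1 (mod 8), and ((D−4)/8, 1, 0, −2) ∈ 𝒫_D when D ≡ 4 (mod 8). -/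
/-- gcd of four integers. -/
def gcd4 (a b c d : ℤ) : ℕ := Int.gcd a (Int.gcd b (Int.gcd c d : ℤ) : ℤ)

/-- The prototype set `𝒫_D`: quadruples `(w,h,t,e)` with `w > 0`, `h > 0`,
`0 ≤ t < gcd(w,h)`, `e + 2h < w`, `gcd(w,h,t,e) = 1` and `D = e² + 8wh`. -/
def IsProto (D : ℤ) (p : ℤ × ℤ × ℤ × ℤ) : Prop :=
  0 < p.1 ∧ 0 < p.2.1 ∧ 0 ≤ p.2.2.1 ∧ p.2.2.1 < (Int.gcd p.1 p.2.1 : ℤ) ∧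
  p.2.2.2 + 2 * p.2.1 < p.1 ∧ gcd4 p.1 p.2.1 p.2.2.1 p.2.2.2 = 1 ∧
  D = p.2.2.2 ^ 2 + 8 * p.1 * p.2.1

lemma sq_mod8 (e : ℤ) : e ^ 2 % 8 ≠ 5 := by
  have h : e ^ 2 % 8 = (e % 8) ^ 2 % 8 := by
    rw [sq, sq, Int.mul_emod]
  have h0 : 0 ≤ e % 8 := Int.emod_nonneg e (by norm_num)
  have h8 : e % 8 < 8 := Int.emod_lt_of_pos e (by norm_num)
  interval_cases h' : e % 8 <;> simp [h, h'] <;> decide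

lemma gcd4_aux (w e : ℤ) : gcd4 w 1 0 e = 1 := by
  simp [gcd4]

theorem stmt0 (D : ℤ) (hD : 0 < D) :
    (D % 8 = 5 →
      (¬ ∃ e w h : ℤ, 1 ≤ w ∧ 1 ≤ h ∧ D = e ^ 2 + 8 * w * h) ∧
      ∀ p : ℤ × ℤ × ℤ × ℤ, ¬ IsProto D p) ∧
    (17 ≤ D →
      (D % 8 = 0 → IsProto D (D / 8, 1, 0, 0)) ∧
      (D % 8 = 1 → IsProto D ((D - 1) / 8, 1, 0, -1)) ∧
      (D % 8 = 4 → IsProto D ((D - 4) / 8, 1, 0, -2))) := by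
  constructor
  · intro h5
    have key : ¬ ∃ e w h : ℤ, 1 ≤ w ∧ 1 ≤ h ∧ D = e ^ 2 + 8 * w * h := by
      rintro ⟨e, w, h, hw, hh, hD'⟩
      have hD2 : D = e ^ 2 + 8 * (w * h) := by linarith [hD']
      have := sq_mod8 e
      omega
    refine ⟨key, fun p hp => ?_⟩
    obtain ⟨hw, hh, _, _, _, _, hD'⟩ := hp
    exact key ⟨p.2.2.2, p.1, p.2.1, hw, hh, hD'⟩
  · intro h17
    refine ⟨fun h8 => ?_, fun h8 => ?_, fun h8 => ?_⟩ <;>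
      · dsimp only [IsProto]
        refine ⟨by omega, by norm_num, by norm_num, by simp [Int.gcd], by omega,
          gcd4_aux _ _, by ring_nf; omega⟩
end

section
/- Let D be a positive integer. Every prototype in 𝒫_D is equivalent, under the equivalence relation generated by the Butterfly moves, to a reduced prototype, i.e. to a prototype of the form (w, 1, 0, e) ∈ 𝒫_D. -/
/-- The Butterfly move `B_q` (for a positive integer `q`) relates `(w,h,t,e)` to
`(w',h',t',e')` whenever `(e+4qh)² < D`, `e' = -e-4qh` and `h' = gcd(qh, w+qt)`. -/
def BMove (D q : ℤ) (p p' : ℤ × ℤ × ℤ × ℤ) : Prop :=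
  (p.2.2.2 + 4 * q * p.2.1) ^ 2 < D ∧
  p'.2.2.2 = -p.2.2.2 - 4 * q * p.2.1 ∧
  p'.2.1 = (Int.gcd (q * p.2.1) (p.1 + q * p.2.2.1) : ℤ)

/-- The Butterfly move `B_∞` relates `(w,h,t,e)` to `(w',h',t',e')` whenever
`e' = -e-4h` and `h' = gcd(t,h)`. -/
def BMoveInf (p p' : ℤ × ℤ × ℤ × ℤ) : Prop :=
  p'.2.2.2 = -p.2.2.2 - 4 * p.2.1 ∧ p'.2.1 = (Int.gcd p.2.2.1 p.2.1 : ℤ)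

/-- Two prototypes of `𝒫_D` are related when some Butterfly move
`B_q`, `q ∈ {1,2,3,…} ∪ {∞}`, takes one to the other. -/
def Butterfly (D : ℤ) (p p' : ℤ × ℤ × ℤ × ℤ) : Prop :=
  IsProto D p ∧ IsProto D p' ∧ ((∃ q : ℤ, 0 < q ∧ BMove D q p p') ∨ BMoveInf p p')

/-!
A prototype with `h > 1` can always be moved to one with smaller `h`. If `t > 0`, the move
`B_∞` gives `h' = gcd(t, h) ≤ t < h`. If `t = 0` and `h ∤ w`, the move `B_1` gives
`h' = gcd(h, w) < h`. If `t = 0` and `h ∣ w`, then `B_1` keeps `h` but lands on a prototype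
which is in one of the first two cases, since `h` dividing both `w` and `w - e - 2h` would
divide `e` as well. In every case the target of a move with `e' = -e - 4h` and `h' ∣ h` exists:
`D - e'² = 8h(w - e - 2h)` fixes `w'`; the condition `e' + 2h' < w'` amounts to
`(e' + 4h')² < D`, true because `e' + 4h'` lies between `e'` and `-e`; and `t'` can be taken
to be `0` if `gcd(w', h') = 1` and `1` otherwise.
Since a prototype with `h = 1` has `t = 0`, induction on `h` finishes the proof.
-/

lemma gcd4_one (a b d : ℤ) : gcd4 a b 1 d = 1 := by
  simp [gcd4]

lemma gcd4_eq_one_of_gcd_eq_one {a b : ℤ} (c d : ℤ) (hab : Int.gcd a b = 1) :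
    gcd4 a b c d = 1 := by
  rw [gcd4, ← Int.gcd_assoc, hab, Nat.cast_one, Int.gcd_one_left]

lemma natAbs_dvd_gcd4 {k a b c d : ℤ} (ha : k ∣ a) (hb : k ∣ b) (hc : k ∣ c)
    (hd : k ∣ d) : k.natAbs ∣ gcd4 a b c d :=
  Int.ofNat_dvd_right.mp <|
    Int.dvd_coe_gcd ha <| Int.dvd_coe_gcd hb <| Int.dvd_coe_gcd hc hd

lemma sq_lt_of_le_of_le {a b x D : ℤ} (ha : a ^ 2 < D) (hb : b ^ 2 < D) (hax : a ≤ x)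
    (hxb : x ≤ b) : x ^ 2 < D := by
  rcases le_or_gt 0 x with hx | hx <;> nlinarith

/-- `D - (e + 4h)² = 8h(w - e - 2h)`. -/
lemma sq_add_four_mul_lt_iff {D w h e : ℤ} (hh : 0 < h) (hD : D = e ^ 2 + 8 * w * h) :
    (e + 4 * h) ^ 2 < D ↔ e + 2 * h < w := by
  rw [← sub_pos, show D - (e + 4 * h) ^ 2 = 8 * h * (w - e - 2 * h) by rw [hD]; ring,
    mul_pos_iff_of_pos_left (by positivity), sub_sub, sub_pos, add_comm]

namespace IsProto

variable {D w h t e : ℤ}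

lemma natAbs_eq_one_of_dvd (hp : IsProto D (w, h, t, e)) {k : ℤ} (hw : k ∣ w) (hh : k ∣ h)
    (ht : k ∣ t) (he : k ∣ e) : k.natAbs = 1 :=
  Nat.dvd_one.mp (hp.2.2.2.2.2.1 ▸ natAbs_dvd_gcd4 hw hh ht he)

lemma eq_zero_of_snd_eq_one (hp : IsProto D (w, 1, t, e)) : t = 0 := by
  obtain ⟨-, -, ht0, ht, -⟩ := hp
  simp only [Int.gcd_one_right, Nat.cast_one] at ht0 ht
  omega

lemma sq_add_four_mul_lt (hp : IsProto D (w, h, t, e)) : (e + 4 * h) ^ 2 < D :=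
  (sq_add_four_mul_lt_iff hp.2.1 hp.2.2.2.2.2.2).mpr hp.2.2.2.2.1

lemma exists_move_target (hp : IsProto D (w, h, t, e)) {g : ℤ} (hg : 0 < g) (hgh : g ∣ h) :
    ∃ t', IsProto D (h / g * (w - e - 2 * h), g, t', -e - 4 * h) := by
  obtain ⟨hw, hh, -, -, hew, -, hD⟩ := hp
  simp only at hw hh hew hD
  have hgw' : g * (h / g * (w - e - 2 * h)) = h * (w - e - 2 * h) := by
    rw [← mul_assoc, Int.mul_ediv_cancel' hgh]
  generalize h / g * (w - e - 2 * h) = w' at hgw' ⊢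
  have hw' : 0 < w' := pos_of_mul_pos_right (hgw' ▸ mul_pos hh (by linarith)) hg.le
  have hD' : D = (-e - 4 * h) ^ 2 + 8 * w' * g := by linear_combination hD - 8 * hgw'
  have hsq : (-e - 4 * h + 4 * g) ^ 2 < D :=
    sq_lt_of_le_of_le (a := -e - 4 * h) (b := -e) (by nlinarith [mul_pos hw' hg])
      (by nlinarith [mul_pos hw hh]) (by linarith) (by linarith [Int.le_of_dvd hh hgh])
  have hew' : -e - 4 * h + 2 * g < w' := (sq_add_four_mul_lt_iff hg hD').mp hsq
  by_cases hcop : Int.gcd w' g = 1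
  · exact ⟨0, hw', hg, le_rfl, by simp [hcop], hew', gcd4_eq_one_of_gcd_eq_one _ _ hcop, hD'⟩
  · have hpos : 0 < Int.gcd w' g := Int.gcd_pos_iff.mpr (Or.inl hw'.ne')
    exact ⟨1, hw', hg, zero_le_one, by dsimp only; omega, hew', gcd4_one _ _ _, hD'⟩

lemma exists_butterfly_lt_of_pos (hp : IsProto D (w, h, t, e)) (ht : 0 < t) :
    ∃ p', Butterfly D (w, h, t, e) p' ∧ p'.2.1 < h := by
  let g : ℤ := (Int.gcd t h : ℤ)
  have hg : 0 < g := Int.natCast_pos.mpr (Int.gcd_pos_iff.mpr (Or.inl ht.ne'))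
  obtain ⟨t', hp'⟩ := hp.exists_move_target hg (Int.gcd_dvd_right t h)
  have hgt : g ≤ t := Int.le_of_dvd ht (Int.gcd_dvd_left t h)
  have hwh : (Int.gcd w h : ℤ) ≤ h := Int.le_of_dvd hp.2.1 (Int.gcd_dvd_right w h)
  exact ⟨_, ⟨hp, hp', Or.inr ⟨rfl, rfl⟩⟩, by linarith [hp.2.2.2.1]⟩

lemma exists_butterfly_one (hp : IsProto D (w, h, 0, e)) :
    ∃ t', Butterfly D (w, h, 0, e)
      (h / Int.gcd h w * (w - e - 2 * h), Int.gcd h w, t', -e - 4 * h) := by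
  have hg : (0 : ℤ) < Int.gcd h w :=
    Int.natCast_pos.mpr (Int.gcd_pos_iff.mpr (Or.inl hp.2.1.ne'))
  obtain ⟨t', hp'⟩ := hp.exists_move_target hg (Int.gcd_dvd_left h w)
  refine ⟨t', hp, hp', Or.inl ⟨1, one_pos, ?_, ?_, ?_⟩⟩
  · simpa using hp.sq_add_four_mul_lt
  · simp
  · simp

lemma exists_butterfly_lt_of_not_dvd (hp : IsProto D (w, h, 0, e)) (hhw : ¬h ∣ w) :
    ∃ p', Butterfly D (w, h, 0, e) p' ∧ p'.2.1 < h := by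
  obtain ⟨t', hmove⟩ := hp.exists_butterfly_one
  refine ⟨_, hmove, lt_of_le_of_ne (Int.le_of_dvd hp.2.1 (Int.gcd_dvd_left h w)) ?_⟩
  intro hg
  exact hhw (hg ▸ Int.gcd_dvd_right h w)

lemma exists_butterfly_of_dvd (hp : IsProto D (w, h, 0, e)) (h1 : 1 < h) (hhw : h ∣ w) :
    ∃ w' t' e', Butterfly D (w, h, 0, e) (w', h, t', e') ∧ (0 < t' ∨ ¬h ∣ w') := by
  obtain ⟨t', hmove⟩ := hp.exists_butterfly_one
  have hg : (Int.gcd h w : ℤ) = h := by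
    rw [Int.gcd_eq_natAbs_left hhw, Int.natAbs_of_nonneg hp.2.1.le]
  rw [hg, Int.ediv_self hp.2.1.ne', one_mul] at hmove
  refine ⟨_, t', _, hmove, ?_⟩
  rcases hmove.2.1.2.2.1.lt_or_eq with ht' | rfl
  · exact Or.inl ht'
  · refine Or.inr fun hdvd => ?_
    have he : h ∣ e := by
      have := dvd_sub (dvd_sub hhw hdvd) (dvd_mul_left h 2)
      rwa [show w - (w - e - 2 * h) - 2 * h = e by ring] at this
    have := hp.natAbs_eq_one_of_dvd hhw dvd_rfl (dvd_zero h) he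
    omega

lemma exists_butterfly_lt (hp : IsProto D (w, h, t, e)) (hcase : 0 < t ∨ ¬h ∣ w) :
    ∃ p', Butterfly D (w, h, t, e) p' ∧ p'.2.1 < h := by
  rcases hp.2.2.1.lt_or_eq with ht | rfl
  · exact hp.exists_butterfly_lt_of_pos ht
  · exact hp.exists_butterfly_lt_of_not_dvd (hcase.resolve_left (lt_irrefl 0))

lemma exists_eqvGen_lt (hp : IsProto D (w, h, t, e)) (h1 : 1 < h) :
    ∃ p', IsProto D p' ∧ p'.2.1 < h ∧ Relation.EqvGen (Butterfly D) (w, h, t, e) p' := by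
  by_cases hcase : 0 < t ∨ ¬h ∣ w
  · obtain ⟨p', hmove, hlt⟩ := hp.exists_butterfly_lt hcase
    exact ⟨p', hmove.2.1, hlt, .rel _ _ hmove⟩
  · obtain ⟨ht, hhw⟩ : t = 0 ∧ h ∣ w := by
      push Not at hcase
      exact ⟨le_antisymm hcase.1 hp.2.2.1, hcase.2⟩
    subst ht
    obtain ⟨w', t', e', hmove, hcase'⟩ := hp.exists_butterfly_of_dvd h1 hhw
    obtain ⟨p', hmove', hlt⟩ := hmove.2.1.exists_butterfly_lt hcase'
    exact ⟨p', hmove'.2.1, hlt, .trans _ _ _ (.rel _ _ hmove) (.rel _ _ hmove')⟩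

end IsProto

theorem stmt2_general (D : ℤ) (p : ℤ × ℤ × ℤ × ℤ) (hp : IsProto D p) :
    ∃ w e : ℤ, IsProto D (w, 1, 0, e) ∧
      Relation.EqvGen (Butterfly D) p (w, 1, 0, e) := by
  induction hn : p.2.1.toNat using Nat.strong_induction_on generalizing p with
  | _ n ih =>
    obtain ⟨w, h, t, e⟩ := p
    obtain hh | rfl := (show 1 ≤ h from hp.2.1).lt_or_eq'
    · obtain ⟨p', hp', hlt, hrel⟩ := hp.exists_eqvGen_lt hh
      obtain ⟨w', e', hred, hrel'⟩ := ih _ (by simp only at hn; omega) p' hp' rfl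
      exact ⟨w', e', hred, .trans _ _ _ hrel hrel'⟩
    · obtain rfl := hp.eq_zero_of_snd_eq_one
      exact ⟨w, e, hp, .refl _⟩

/-- Every prototype in `𝒫_D` is equivalent, under the equivalence relation generated
by the Butterfly moves, to a reduced prototype `(w, 1, 0, e) ∈ 𝒫_D`. -/
theorem stmt2 (D : ℤ) (hD : 0 < D) (p : ℤ × ℤ × ℤ × ℤ) (hp : IsProto D p) :
    ∃ w e : ℤ, IsProto D (w, 1, 0, e) ∧
      Relation.EqvGen (Butterfly D) p (w, 1, 0, e) :=
  stmt2_general D p hp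
end

section
/- Let D be a positive integer, let e ∈ 𝒮_D, let q be an odd prime, and set F_q(e) = e + 4(q−1) and F_{−q}(e) = e − 4(q−1). (1) If F_q(e) ∈ 𝒮_D and D ≢ e² (mod q), then e ∼ F_q(e) in 𝒮_D. (2) If F_{−q}(e) ∈ 𝒮_D and D ≢ (e+4)² (mod q), then e ∼ F_{−q}(e) in 𝒮_D. -/
/-- The set `𝒮_D = {e ∈ ℤ : e² ≡ D (mod 8), e² < D and (e+4)² < D}`. -/
def SD (D : ℤ) : Set ℤ := {e : ℤ | e ^ 2 % 8 = D % 8 ∧ e ^ 2 < D ∧ (e + 4) ^ 2 < D}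

/-- The generating relation on `𝒮_D`: `e ∼ -e-4q` whenever `q` is a positive integer
such that `-e-4q ∈ 𝒮_D` and `gcd(q, w) = 1` where `w = (D-e²)/8`. -/
def SMove (D : ℤ) (e e' : ℤ) : Prop :=
  e ∈ SD D ∧ e' ∈ SD D ∧
    ∃ q : ℤ, 0 < q ∧ e' = -e - 4 * q ∧ Int.gcd q ((D - e ^ 2) / 8) = 1

lemma gcd_aux (D x : ℤ) (q : ℕ) (hq : q.Prime) (h8 : (8:ℤ) ∣ D - x)
    (hnd : ¬ ((q : ℤ) ∣ (D - x))) : Int.gcd (q:ℤ) ((D - x) / 8) = 1 := by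
  have hg : Int.gcd (q:ℤ) ((D - x)/8) = Nat.gcd q ((D - x)/8).natAbs := by
    simp [Int.gcd]
  rw [hg]
  refine (Nat.Prime.coprime_iff_not_dvd hq).mpr ?_
  intro hdvd
  apply hnd
  have h1 : (q:ℤ) ∣ (D - x)/8 := by
    rw [← Int.natAbs_dvd_natAbs]
    simpa using hdvd
  have h2 : 8 * ((D - x)/8) = D - x := Int.mul_ediv_cancel' h8
  obtain ⟨c, hc⟩ := h1
  exact ⟨8 * c, by rw [← h2, hc]; ring⟩

/-- For an odd prime `q` and `e ∈ 𝒮_D`, setting `F_q(e) = e + 4(q-1)` and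
`F_{-q}(e) = e - 4(q-1)`: (1) if `F_q(e) ∈ 𝒮_D` and `D ≢ e² (mod q)` then
`e ∼ F_q(e)`; (2) if `F_{-q}(e) ∈ 𝒮_D` and `D ≢ (e+4)² (mod q)` then
`e ∼ F_{-q}(e)`. -/
theorem stmt5 (D : ℤ) (hD : 0 < D) (e : ℤ) (he : e ∈ SD D)
    (q : ℕ) (hq : q.Prime) (hodd : Odd q) :
    ((e + 4 * ((q : ℤ) - 1) ∈ SD D → ¬ ((q : ℤ) ∣ (D - e ^ 2)) →
      Relation.EqvGen (SMove D) e (e + 4 * ((q : ℤ) - 1)))) ∧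
    ((e - 4 * ((q : ℤ) - 1) ∈ SD D → ¬ ((q : ℤ) ∣ (D - (e + 4) ^ 2)) →
      Relation.EqvGen (SMove D) e (e - 4 * ((q : ℤ) - 1)))) := by
  obtain ⟨he1, he2, he3⟩ := he
  have hqpos : (0:ℤ) < q := by exact_mod_cast hq.pos
  constructor
  · intro hf hnd
    obtain ⟨hf1, hf2, hf3⟩ := hf
    have hfm : (-e - 4*(q:ℤ)) ∈ SD D := by
      refine ⟨?_, ?_, ?_⟩
      · have h : (-e - 4*(q:ℤ))^2 = e^2 + 8*(e*q + 2*q^2) := by ring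
        rw [h, Int.add_mul_emod_self_left, he1]
      · have h : (-e - 4*(q:ℤ))^2 = (e + 4*((q:ℤ)-1) + 4)^2 := by ring
        rw [h]; exact hf3
      · have h : (-e - 4*(q:ℤ) + 4)^2 = (e + 4*((q:ℤ)-1))^2 := by ring
        rw [h]; exact hf2
    have h8 : (8:ℤ) ∣ D - e^2 := by omega
    have m1 : SMove D e (-e - 4*(q:ℤ)) :=
      ⟨⟨he1, he2, he3⟩, hfm, q, hqpos, rfl, gcd_aux D (e^2) q hq h8 hnd⟩
    have m2 : SMove D (-e - 4*(q:ℤ)) (e + 4*((q:ℤ)-1)) := by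
      refine ⟨hfm, ⟨hf1, hf2, hf3⟩, 1, one_pos, by ring, ?_⟩
      simp [Int.gcd]
    exact Relation.EqvGen.trans _ _ _ (Relation.EqvGen.rel _ _ m1)
      (Relation.EqvGen.rel _ _ m2)
  · intro hf hnd
    obtain ⟨hf1, hf2, hf3⟩ := hf
    have hfm : (-e - 4) ∈ SD D := by
      refine ⟨?_, ?_, ?_⟩
      · have h : (-e - 4)^2 = e^2 + 8*(e + 2) := by ring
        rw [h, Int.add_mul_emod_self_left, he1]
      · have h : (-e - 4)^2 = (e + 4)^2 := by ring
        rw [h]; exact he3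
      · have h : (-e - 4 + 4)^2 = e^2 := by ring
        rw [h]; exact he2
    have m1 : SMove D e (-e - 4) := by
      refine ⟨⟨he1, he2, he3⟩, hfm, 1, one_pos, by ring, ?_⟩
      simp [Int.gcd]
    have h8 : (8:ℤ) ∣ D - (e+4)^2 := by
      have h : (e + 4)^2 % 8 = D % 8 := by
        have hh : (e + 4)^2 = e^2 + 8*(e + 2) := by ring
        rw [hh, Int.add_mul_emod_self_left, he1]
      omega
    have m2 : SMove D (-e - 4) (e - 4*((q:ℤ)-1)) := by
      refine ⟨hfm, ⟨hf1, hf2, hf3⟩, q, hqpos, by ring, ?_⟩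
      have h : (-e - 4)^2 = (e + 4)^2 := by ring
      rw [h]
      exact gcd_aux D ((e+4)^2) q hq h8 hnd
    exact Relation.EqvGen.trans _ _ _ (Relation.EqvGen.rel _ _ m1)
      (Relation.EqvGen.rel _ _ m2)
end

section
/- Let D be a positive integer and let e ∈ 𝒮_D be such that e − 24 ∈ 𝒮_D and e + 32 ∈ 𝒮_D. Then either e ∼ e + 8 in 𝒮_D, or the pair (D, e) reduced modulo 105 equals (4, −10) or (4, −2), i.e. D ≡ 4 (mod 105) and e ≡ −10 or −2 (mod 105). -/
private lemma gcdp (p w : ℤ) (hp : Nat.Prime p.natAbs) (h : ¬ p ∣ w) : Int.gcd p w = 1 := by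
  have h' : ¬ p.natAbs ∣ w.natAbs := fun hd => h (Int.natAbs_dvd_natAbs.mp hd)
  exact (Nat.Prime.coprime_iff_not_dvd hp).mpr h'

private lemma gcd3 (w : ℤ) (h : ¬ (3:ℤ) ∣ w) : Int.gcd 3 w = 1 := gcdp 3 w (by norm_num) h
private lemma gcd5 (w : ℤ) (h : ¬ (5:ℤ) ∣ w) : Int.gcd 5 w = 1 := gcdp 5 w (by norm_num) h
private lemma gcd7 (w : ℤ) (h : ¬ (7:ℤ) ∣ w) : Int.gcd 7 w = 1 := gcdp 7 w (by norm_num) h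

private lemma gcd9 (w : ℤ) (h : ¬ (3:ℤ) ∣ w) : Int.gcd 9 w = 1 := by
  have h' : ¬ (3:ℕ) ∣ w.natAbs := fun hd => h (Int.natAbs_dvd_natAbs.mp hd)
  have h3 : Nat.Coprime 3 w.natAbs := (Nat.Prime.coprime_iff_not_dvd (by norm_num)).mpr h'
  have h9 := Nat.Coprime.pow_left 2 h3
  norm_num at h9
  exact h9

private lemma memSD (D e k : ℤ) (hmod : e^2 % 8 = D % 8)
    (hsq : ∀ j : ℤ, -6 ≤ j → j ≤ 9 → (e+4*j)^2 < D)
    (h1 : -6 ≤ k) (h2 : k ≤ 8) : (e + 4*k) ∈ SD D := by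
  refine ⟨?_, hsq k h1 (by omega), ?_⟩
  · rw [show (e+4*k)^2 = e^2 + 8*(k*e+2*k^2) by ring, Int.add_mul_emod_self_left]; exact hmod
  · rw [show (e+4*k+4)^2 = (e+4*(k+1))^2 by ring]; exact hsq (k+1) (by omega) (by omega)

private lemma memSDneg (D e m : ℤ) (hmod : e^2 % 8 = D % 8)
    (hsq : ∀ j : ℤ, -6 ≤ j → j ≤ 9 → (e+4*j)^2 < D)
    (h1 : -5 ≤ m) (h2 : m ≤ 9) : (-(e + 4*m)) ∈ SD D := by
  refine ⟨?_, ?_, ?_⟩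
  · rw [show (-(e+4*m))^2 = e^2 + 8*(m*e+2*m^2) by ring, Int.add_mul_emod_self_left]; exact hmod
  · rw [show (-(e+4*m))^2 = (e+4*m)^2 by ring]; exact hsq m (by omega) h2
  · rw [show (-(e+4*m)+4)^2 = (e+4*(m-1))^2 by ring]; exact hsq (m-1) (by omega) (by omega)

/-- An edge in the "pair graph": connects `e+4u` to `e+4v` (`u < v`) via the
negative node `-(e+4(v+1))`, using moves with `q = v+1-u` and `q = 1`. -/
private lemma sedge (D e w0 u v q W x y : ℤ) (hw0 : D - e^2 = 8*w0)
    (hmod : e^2 % 8 = D % 8)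
    (hsq : ∀ j : ℤ, -6 ≤ j → j ≤ 9 → (e+4*j)^2 < D)
    (hu : -6 ≤ u) (hv : v ≤ 8) (huv : u < v)
    (hq : q = v + 1 - u) (hW : W = w0 - u*e - 2*u^2)
    (hg : Int.gcd q W = 1)
    (hx : x = e + 4*u) (hy : y = e + 4*v) :
    Relation.EqvGen (SMove D) x y := by
  subst hx hy hq hW
  have hdiv : (D - (e+4*u)^2) / 8 = w0 - u*e - 2*u^2 := by
    rw [show D - (e+4*u)^2 = 8*(w0 - u*e - 2*u^2) by linear_combination hw0]
    exact Int.mul_ediv_cancel_left _ (by norm_num)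
  have hdiv2 : (D - (e+4*v)^2) / 8 = w0 - v*e - 2*v^2 := by
    rw [show D - (e+4*v)^2 = 8*(w0 - v*e - 2*v^2) by linear_combination hw0]
    exact Int.mul_ediv_cancel_left _ (by norm_num)
  have m1 : SMove D (e+4*u) (-(e+4*(v+1))) :=
    ⟨memSD D e u hmod hsq hu (by omega), memSDneg D e (v+1) hmod hsq (by omega) (by omega),
     v+1-u, by omega, by ring, by rw [hdiv]; exact hg⟩
  have m2 : SMove D (e+4*v) (-(e+4*(v+1))) :=
    ⟨memSD D e v hmod hsq (by omega) hv, memSDneg D e (v+1) hmod hsq (by omega) (by omega),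
     1, one_pos, by ring, by rw [hdiv2]; simp [Int.gcd]⟩
  exact Relation.EqvGen.trans _ _ _ (Relation.EqvGen.rel _ _ m1)
    (Relation.EqvGen.symm _ _ (Relation.EqvGen.rel _ _ m2))

set_option maxHeartbeats 4000000 in
/-- If `e ∈ 𝒮_D` with `e - 24 ∈ 𝒮_D` and `e + 32 ∈ 𝒮_D`, then either `e ∼ e + 8`
in `𝒮_D`, or `(D,e) ≡ (4,-10)` or `(4,-2)` modulo `105`. -/
theorem stmt6 (D : ℤ) (hD : 0 < D) (e : ℤ) (he : e ∈ SD D)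
    (h1 : e - 24 ∈ SD D) (h2 : e + 32 ∈ SD D) :
    Relation.EqvGen (SMove D) e (e + 8) ∨
      ((105 : ℤ) ∣ (D - 4) ∧ ((105 : ℤ) ∣ (e + 10) ∨ (105 : ℤ) ∣ (e + 2))) := by
  obtain ⟨hmod, -, -⟩ := he
  obtain ⟨w0, hw0⟩ : (8:ℤ) ∣ D - e^2 := by
    have h := hmod; generalize e ^ 2 = E at h ⊢; omega
  have hsq : ∀ j : ℤ, -6 ≤ j → j ≤ 9 → (e+4*j)^2 < D := by
    intro k hk1 hk2
    have ha := h1.2.1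
    have hb := h2.2.2
    nlinarith [mul_nonneg (show (0:ℤ) ≤ 36-4*k by linarith)
        (show (0:ℤ) ≤ D - (e-24)^2 - 1 by nlinarith),
      mul_nonneg (show (0:ℤ) ≤ 4*k+24 by linarith)
        (show (0:ℤ) ≤ D - (e+36)^2 - 1 by nlinarith),
      mul_nonneg (show (0:ℤ) ≤ 36-4*k by linarith) (show (0:ℤ) ≤ 4*k+24 by linarith)]
  have hstart : e + 4*(0:ℤ) = e := by ring
  have hend : e + 4*(2:ℤ) = e + 8 := by ring
  by_cases hA0 : (3:ℤ) ∣ w0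
  · by_cases hA2 : (3:ℤ) ∣ (w0 - 2*e - 8)
    · -- A0 ∧ A2 : hence ¬A1, and e ≡ 2 mod 3
      by_cases hB3 : (5:ℤ) ∣ (w0 - 3*e - 18)
      · by_cases hB2 : (5:ℤ) ∣ (w0 - 2*e - 8)
        · by_cases hC3 : (7:ℤ) ∣ (w0 - 3*e - 18)
          · by_cases hC2 : (7:ℤ) ∣ (w0 - 2*e - 8)
            · -- exceptional case 1
              right
              have h10 : (105:ℤ) ∣ (e + 10) ∧ (105:ℤ) ∣ (w0 + 12) := by clear hw0 hmod hsq h1 h2; omega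
              obtain ⟨⟨a, ha⟩, ⟨b, hb⟩⟩ := h10
              exact ⟨⟨(e-10)*a + 8*b, by linear_combination hw0 + (e-10)*ha + 8*hb⟩,
                Or.inl ⟨a, ha⟩⟩
            · -- path [0,4,8,2]
              left
              have e1 := sedge D e w0 0 4 5 w0 _ _ hw0 hmod hsq (by norm_num) (by norm_num) (by norm_num) (by norm_num)
                (by ring) (gcd5 _ (by clear hw0 hmod hsq h1 h2; omega)) rfl rfl
              have e2 := sedge D e w0 4 8 5 (w0 - 4*e - 32) _ _ hw0 hmod hsq (by norm_num) (by norm_num) (by norm_num)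
                (by norm_num) (by ring) (gcd5 _ (by clear hw0 hmod hsq h1 h2; omega)) rfl rfl
              have e3 := sedge D e w0 2 8 7 (w0 - 2*e - 8) _ _ hw0 hmod hsq (by norm_num) (by norm_num) (by norm_num)
                (by norm_num) (by ring) (gcd7 _ hC2) rfl rfl
              have key := Relation.EqvGen.trans _ _ _ e1 (.trans _ _ _ e2 (.symm _ _ e3))
              rw [hstart, hend] at key
              exact key
          · -- path [0,-4,2]
            left
            have e1 := sedge D e w0 (-4) 0 5 (w0 + 4*e - 32) _ _ hw0 hmod hsq (by norm_num) (by norm_num) (by norm_num)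
              (by norm_num) (by ring) (gcd5 _ (by clear hw0 hmod hsq h1 h2; omega)) rfl rfl
            have e2 := sedge D e w0 (-4) 2 7 (w0 + 4*e - 32) _ _ hw0 hmod hsq (by norm_num) (by norm_num) (by norm_num)
              (by norm_num) (by ring) (gcd7 _ (by clear hw0 hmod hsq h1 h2; omega)) rfl rfl
            have key := Relation.EqvGen.trans _ _ _ (.symm _ _ e1) e2
            rw [hstart, hend] at key
            exact key
        · -- path [0,-2,6,2]
          left
          have e1 := sedge D e w0 (-2) 0 3 (w0 + 2*e - 8) _ _ hw0 hmod hsq (by norm_num) (by norm_num) (by norm_num)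
            (by norm_num) (by ring) (gcd3 _ (by clear hw0 hmod hsq h1 h2; omega)) rfl rfl
          have e2 := sedge D e w0 (-2) 6 9 (w0 + 2*e - 8) _ _ hw0 hmod hsq (by norm_num) (by norm_num) (by norm_num)
            (by norm_num) (by ring) (gcd9 _ (by clear hw0 hmod hsq h1 h2; omega)) rfl rfl
          have e3 := sedge D e w0 2 6 5 (w0 - 2*e - 8) _ _ hw0 hmod hsq (by norm_num) (by norm_num) (by norm_num)
            (by norm_num) (by ring) (gcd5 _ hB2) rfl rfl
          have key := Relation.EqvGen.trans _ _ _ (.symm _ _ e1) (.trans _ _ _ e2 (.symm _ _ e3))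
          rw [hstart, hend] at key
          exact key
      · -- path [0,-2,2]
        left
        have e1 := sedge D e w0 (-2) 0 3 (w0 + 2*e - 8) _ _ hw0 hmod hsq (by norm_num) (by norm_num) (by norm_num)
          (by norm_num) (by ring) (gcd3 _ (by clear hw0 hmod hsq h1 h2; omega)) rfl rfl
        have e2 := sedge D e w0 (-2) 2 5 (w0 + 2*e - 8) _ _ hw0 hmod hsq (by norm_num) (by norm_num) (by norm_num)
          (by norm_num) (by ring) (gcd5 _ (by clear hw0 hmod hsq h1 h2; omega)) rfl rfl
        have key := Relation.EqvGen.trans _ _ _ (.symm _ _ e1) e2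
        rw [hstart, hend] at key
        exact key
    · -- A0 ∧ ¬A2
      by_cases hB0 : (5:ℤ) ∣ w0
      · by_cases hC0 : (7:ℤ) ∣ w0
        · by_cases hA1 : (3:ℤ) ∣ (w0 - e - 2)
          · by_cases hB1 : (5:ℤ) ∣ (w0 - e - 2)
            · by_cases hC1 : (7:ℤ) ∣ (w0 - e - 2)
              · -- exceptional case 2
                right
                have h10 : (105:ℤ) ∣ (e + 2) ∧ (105:ℤ) ∣ w0 := by clear hw0 hmod hsq h1 h2; omega
                obtain ⟨⟨a, ha⟩, ⟨b, hb⟩⟩ := h10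
                exact ⟨⟨(e-2)*a + 8*b, by linear_combination hw0 + (e-2)*ha + 8*hb⟩,
                  Or.inr ⟨a, ha⟩⟩
              · -- path [0,-6,-2,2]
                left
                have e1 := sedge D e w0 (-6) 0 7 (w0 + 6*e - 72) _ _ hw0 hmod hsq (by norm_num) (by norm_num) (by norm_num)
                  (by norm_num) (by ring) (gcd7 _ (by clear hw0 hmod hsq h1 h2; omega)) rfl rfl
                have e2 := sedge D e w0 (-6) (-2) 5 (w0 + 6*e - 72) _ _ hw0 hmod hsq (by norm_num) (by norm_num) (by norm_num)
                  (by norm_num) (by ring) (gcd5 _ (by clear hw0 hmod hsq h1 h2; omega)) rfl rfl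
                have e3 := sedge D e w0 (-2) 2 5 (w0 + 2*e - 8) _ _ hw0 hmod hsq (by norm_num) (by norm_num) (by norm_num)
                  (by norm_num) (by ring) (gcd5 _ (by clear hw0 hmod hsq h1 h2; omega)) rfl rfl
                have key := Relation.EqvGen.trans _ _ _ (.symm _ _ e1) (.trans _ _ _ e2 e3)
                rw [hstart, hend] at key
                exact key
            · -- path [0,-4,4,2]
              left
              have e1 := sedge D e w0 (-4) 0 5 (w0 + 4*e - 32) _ _ hw0 hmod hsq (by norm_num) (by norm_num) (by norm_num)
                (by norm_num) (by ring) (gcd5 _ (by clear hw0 hmod hsq h1 h2; omega)) rfl rfl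
              have e2 := sedge D e w0 (-4) 4 9 (w0 + 4*e - 32) _ _ hw0 hmod hsq (by norm_num) (by norm_num) (by norm_num)
                (by norm_num) (by ring) (gcd9 _ (by clear hw0 hmod hsq h1 h2; omega)) rfl rfl
              have e3 := sedge D e w0 2 4 3 (w0 - 2*e - 8) _ _ hw0 hmod hsq (by norm_num) (by norm_num) (by norm_num)
                (by norm_num) (by ring) (gcd3 _ hA2) rfl rfl
              have key := Relation.EqvGen.trans _ _ _ (.symm _ _ e1) (.trans _ _ _ e2 (.symm _ _ e3))
              rw [hstart, hend] at key
              exact key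
          · -- path [0,-2,6,4,2]
            left
            have e1 := sedge D e w0 (-2) 0 3 (w0 + 2*e - 8) _ _ hw0 hmod hsq (by norm_num) (by norm_num) (by norm_num)
              (by norm_num) (by ring) (gcd3 _ (by clear hw0 hmod hsq h1 h2; omega)) rfl rfl
            have e2 := sedge D e w0 (-2) 6 9 (w0 + 2*e - 8) _ _ hw0 hmod hsq (by norm_num) (by norm_num) (by norm_num)
              (by norm_num) (by ring) (gcd9 _ (by clear hw0 hmod hsq h1 h2; omega)) rfl rfl
            have e3 := sedge D e w0 4 6 3 (w0 - 4*e - 32) _ _ hw0 hmod hsq (by norm_num) (by norm_num) (by norm_num)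
              (by norm_num) (by ring) (gcd3 _ (by clear hw0 hmod hsq h1 h2; omega)) rfl rfl
            have e4 := sedge D e w0 2 4 3 (w0 - 2*e - 8) _ _ hw0 hmod hsq (by norm_num) (by norm_num) (by norm_num)
              (by norm_num) (by ring) (gcd3 _ hA2) rfl rfl
            have key := Relation.EqvGen.trans _ _ _ (.symm _ _ e1)
              (.trans _ _ _ e2 (.trans _ _ _ (.symm _ _ e3) (.symm _ _ e4)))
            rw [hstart, hend] at key
            exact key
        · by_cases hA1 : (3:ℤ) ∣ (w0 - e - 2)
          · by_cases hB2 : (5:ℤ) ∣ (w0 - 2*e - 8)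
            · -- path [0,-4,-2,2]
              left
              have e1 := sedge D e w0 (-4) 0 5 (w0 + 4*e - 32) _ _ hw0 hmod hsq (by norm_num) (by norm_num) (by norm_num)
                (by norm_num) (by ring) (gcd5 _ (by clear hw0 hmod hsq h1 h2; omega)) rfl rfl
              have e2 := sedge D e w0 (-4) (-2) 3 (w0 + 4*e - 32) _ _ hw0 hmod hsq (by norm_num) (by norm_num) (by norm_num)
                (by norm_num) (by ring) (gcd3 _ (by clear hw0 hmod hsq h1 h2; omega)) rfl rfl
              have e3 := sedge D e w0 (-2) 2 5 (w0 + 2*e - 8) _ _ hw0 hmod hsq (by norm_num) (by norm_num) (by norm_num)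
                (by norm_num) (by ring) (gcd5 _ (by clear hw0 hmod hsq h1 h2; omega)) rfl rfl
              have key := Relation.EqvGen.trans _ _ _ (.symm _ _ e1) (.trans _ _ _ e2 e3)
              rw [hstart, hend] at key
              exact key
            · -- path [0,6,2]
              left
              have e1 := sedge D e w0 0 6 7 w0 _ _ hw0 hmod hsq (by norm_num) (by norm_num) (by norm_num) (by norm_num)
                (by ring) (gcd7 _ hC0) rfl rfl
              have e2 := sedge D e w0 2 6 5 (w0 - 2*e - 8) _ _ hw0 hmod hsq (by norm_num) (by norm_num) (by norm_num)
                (by norm_num) (by ring) (gcd5 _ hB2) rfl rfl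
              have key := Relation.EqvGen.trans _ _ _ e1 (.symm _ _ e2)
              rw [hstart, hend] at key
              exact key
          · -- path [0,6,4,2]
            left
            have e1 := sedge D e w0 0 6 7 w0 _ _ hw0 hmod hsq (by norm_num) (by norm_num) (by norm_num) (by norm_num)
              (by ring) (gcd7 _ hC0) rfl rfl
            have e2 := sedge D e w0 4 6 3 (w0 - 4*e - 32) _ _ hw0 hmod hsq (by norm_num) (by norm_num) (by norm_num)
              (by norm_num) (by ring) (gcd3 _ (by clear hw0 hmod hsq h1 h2; omega)) rfl rfl
            have e3 := sedge D e w0 2 4 3 (w0 - 2*e - 8) _ _ hw0 hmod hsq (by norm_num) (by norm_num) (by norm_num)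
              (by norm_num) (by ring) (gcd3 _ hA2) rfl rfl
            have key := Relation.EqvGen.trans _ _ _ e1 (.trans _ _ _ (.symm _ _ e2) (.symm _ _ e3))
            rw [hstart, hend] at key
            exact key
      · -- path [0,4,2]
        left
        have e1 := sedge D e w0 0 4 5 w0 _ _ hw0 hmod hsq (by norm_num) (by norm_num) (by norm_num) (by norm_num)
          (by ring) (gcd5 _ hB0) rfl rfl
        have e2 := sedge D e w0 2 4 3 (w0 - 2*e - 8) _ _ hw0 hmod hsq (by norm_num) (by norm_num) (by norm_num)
          (by norm_num) (by ring) (gcd3 _ hA2) rfl rfl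
        have key := Relation.EqvGen.trans _ _ _ e1 (.symm _ _ e2)
        rw [hstart, hend] at key
        exact key
  · -- direct path [0,2]
    left
    have e1 := sedge D e w0 0 2 3 w0 _ _ hw0 hmod hsq (by norm_num) (by norm_num) (by norm_num) (by norm_num)
      (by ring) (gcd3 _ hA0) rfl rfl
    have key := e1
    rw [hstart, hend] at key
    exact key
end

section
/- Let D be an integer with D ≥ 3025 (= 55²). Then every element of 𝒮_D is equivalent, under the equivalence relation ∼ on 𝒮_D, to an element of 𝒯_D. -/
/-- The set `𝒯_D = {e ∈ 𝒮_D : e - 24 ∈ 𝒮_D and e + 32 ∈ 𝒮_D}`. -/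
def TD (D : ℤ) : Set ℤ := {e : ℤ | e ∈ SD D ∧ e - 24 ∈ SD D ∧ e + 32 ∈ SD D}



lemma sq_lt_of_between {D a t b : ℤ} (h1 : a ≤ t) (h2 : t ≤ b)
    (ha : a ^ 2 < D) (hb : b ^ 2 < D) : t ^ 2 < D := by
  rcases le_or_gt t 0 with h | h
  · nlinarith
  · nlinarith

lemma sq_shift (e : ℤ) (k : ℤ) : (e + 4 * k) ^ 2 % 8 = e ^ 2 % 8 := by
  have h : (e + 4 * k) ^ 2 = e ^ 2 + 8 * (k * e + 2 * k ^ 2) := by ring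
  rw [h, Int.add_mul_emod_self_left]

lemma PB : ∀ q : ℕ, q.Prime → 17 ≤ q → q ^ 3 ≤ ∏ p ∈ q.primesBelow, p := by
  intro q
  induction q using Nat.strong_induction_on with
  | _ q IH =>
    intro hq h17
    rcases le_or_gt q 31 with hq31 | hq31
    · have hprod17 : (∏ p ∈ Nat.primesBelow 17, p) = 30030 := by decide
      have hsub : Nat.primesBelow 17 ⊆ q.primesBelow := by
        intro p hp
        have := Nat.mem_primesBelow.mp hp
        exact Nat.mem_primesBelow.mpr ⟨lt_of_lt_of_le this.1 h17, this.2⟩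
      have h1 : (∏ p ∈ Nat.primesBelow 17, p) ≤ ∏ p ∈ q.primesBelow, p :=
        Finset.prod_le_prod_of_subset_of_one_le' hsub (fun i hi _ =>
          (Nat.prime_of_mem_primesBelow hi).one_lt.le)
      have h2 : q ^ 3 ≤ 31 ^ 3 := Nat.pow_le_pow_left hq31 3
      omega
    · obtain ⟨r, hr, hr1, hr2⟩ := Nat.exists_prime_lt_and_le_two_mul (q / 2) (by omega)
      have hodd : q % 2 = 1 := Nat.odd_iff.mp (hq.odd_of_ne_two (by omega))
      have hrq : r < q := by omega
      have hr17 : 17 ≤ r := by omega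
      have hIH : r ^ 3 ≤ ∏ p ∈ r.primesBelow, p := IH r hrq hr hr17
      have hins : (∏ p ∈ Nat.primesBelow (r + 1), p) = r * ∏ p ∈ r.primesBelow, p := by
        rw [Nat.primesBelow_succ, if_pos hr, Finset.prod_insert (Nat.notMem_primesBelow r)]
      have hsub : Nat.primesBelow (r + 1) ⊆ q.primesBelow := by
        intro p hp
        have := Nat.mem_primesBelow.mp hp
        exact Nat.mem_primesBelow.mpr ⟨by omega, this.2⟩
      have h1 : (∏ p ∈ Nat.primesBelow (r + 1), p) ≤ ∏ p ∈ q.primesBelow, p :=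
        Finset.prod_le_prod_of_subset_of_one_le' hsub (fun i hi _ =>
          (Nat.prime_of_mem_primesBelow hi).one_lt.le)
      have hq2r : q ≤ 2 * r - 1 := by omega
      have hkey : q ^ 3 ≤ r * r ^ 3 := by
        calc q ^ 3 ≤ (2 * r) ^ 3 := Nat.pow_le_pow_left (by omega) 3
        _ = 8 * r ^ 3 := by ring
        _ ≤ r * r ^ 3 := Nat.mul_le_mul_right _ (by omega)
      calc q ^ 3 ≤ r * r ^ 3 := hkey
      _ ≤ r * ∏ p ∈ r.primesBelow, p := Nat.mul_le_mul_left _ hIH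
      _ = ∏ p ∈ Nat.primesBelow (r + 1), p := hins.symm
      _ ≤ ∏ p ∈ q.primesBelow, p := h1


lemma primorial_bound (q W : ℕ) (hq : q.Prime) (h17 : 17 ≤ q) (hW : 0 < W)
    (hall : ∀ p : ℕ, p.Prime → p < q → p ∣ W) : q ^ 3 ≤ W := by
  have h1 : (∏ p ∈ q.primesBelow, p) ∣ W := by
    refine Finset.prod_primes_dvd _ (fun p hp => ?_) (fun p hp => ?_)
    · exact (Nat.prime_of_mem_primesBelow hp).prime
    · exact hall p (Nat.prime_of_mem_primesBelow hp) (Nat.lt_of_mem_primesBelow hp)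
  exact le_trans (PB q hq h17) (Nat.le_of_dvd hW h1)

-- flip membership
lemma flip_mem {D e : ℤ} (he : e ∈ SD D) : -e - 4 ∈ SD D := by
  obtain ⟨h8, h0, h4⟩ := he
  refine ⟨?_, ?_, ?_⟩
  · have : (-e - 4) ^ 2 = (e + 4 * 1) ^ 2 := by ring
    rw [this, sq_shift, h8]
  · have : (-e - 4) ^ 2 = (e + 4) ^ 2 := by ring
    rw [this]; exact h4
  · have : (-e - 4 + 4) ^ 2 = e ^ 2 := by ring
    rw [this]; exact h0

lemma flip_move {D e : ℤ} (he : e ∈ SD D) : SMove D e (-e - 4) :=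
  ⟨he, flip_mem he, 1, one_pos, by ring, by simp [Int.gcd]⟩

lemma mem_TD {D e : ℤ} (hD : 3025 ≤ D) (he : e ∈ SD D)
    (h1 : (e - 24) ^ 2 < D) (h2 : (e + 36) ^ 2 < D) : e ∈ TD D := by
  obtain ⟨h8, h0, h4⟩ := he
  refine ⟨⟨h8, h0, h4⟩, ⟨?_, h1, ?_⟩, ⟨?_, ?_, ?_⟩⟩
  · have : (e - 24) = e + 4 * (-6) := by ring
    rw [this, sq_shift]; exact h8
  · have h : (e - 24 + 4) = e - 20 := by ring
    rw [h]
    exact sq_lt_of_between (by linarith : e - 24 ≤ e - 20) (by linarith : e - 20 ≤ e) h1 h0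
  · have : (e + 32) = e + 4 * 8 := by ring
    rw [this, sq_shift]; exact h8
  · exact sq_lt_of_between (by linarith : e ≤ e + 32) (by linarith : e + 32 ≤ e + 36) h0 h2
  · have : (e + 32 + 4) = e + 36 := by ring
    rw [this]; exact h2


lemma climb (D : ℤ) (hD : 3025 ≤ D) : ∀ n : ℕ, ∀ e : ℤ, e ∈ SD D → -(n : ℤ) ≤ e →
    D ≤ (e - 24) ^ 2 → ∃ f ∈ TD D, Relation.EqvGen (SMove D) e f := by
  intro n
  induction n using Nat.strong_induction_on with
  | _ n IH =>
    intro e he hn hlow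
    obtain ⟨h8, h0, h4⟩ := he
    -- e is very negative
    have he31 : e ≤ -31 := by
      by_contra hc
      push_neg at hc
      have h11 : e ≤ 11 := by nlinarith
      nlinarith [mul_nonneg (by linarith : (0:ℤ) ≤ 54 - (24 - e)) (by linarith : (0:ℤ) ≤ 24 - e)]
    -- w
    have h8dvd : (8 : ℤ) ∣ D - e ^ 2 := by
      have h := Int.sub_emod D (e ^ 2) 8
      rw [h8] at h
      simp at h
      exact h
    set w : ℤ := (D - e ^ 2) / 8 with hw
    have hw8 : D - e ^ 2 = 8 * w := by
      rw [hw]; exact (Int.mul_ediv_cancel' h8dvd).symm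
    have hwpos : 0 < w := by nlinarith
    set W : ℕ := w.toNat with hWdef
    have hWw : (W : ℤ) = w := Int.toNat_of_nonneg hwpos.le
    have hWpos : 0 < W := by omega
    -- least coprime q ≥ 2
    have hPex : ∃ k : ℕ, 2 ≤ k ∧ Nat.gcd k W = 1 :=
      ⟨W + 1, by omega, by rw [Nat.gcd_self_add_left]; exact Nat.gcd_one_left W⟩
    set q : ℕ := Nat.find hPex with hqdef
    obtain ⟨hq2, hqgcd⟩ := Nat.find_spec hPex
    have hqmin : ∀ m : ℕ, m < q → ¬(2 ≤ m ∧ Nat.gcd m W = 1) := fun m hm => Nat.find_min hPex hm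
    -- q is prime
    have hqprime : q.Prime := by
      by_contra hnp
      obtain ⟨p, hp, hpdvd⟩ := Nat.exists_prime_and_dvd (by omega : q ≠ 1)
      have hplt : p < q := by
        rcases lt_or_eq_of_le (Nat.le_of_dvd (by omega) hpdvd) with h | h
        · exact h
        · exact absurd (h ▸ hp) hnp
      exact hqmin p hplt ⟨hp.two_le, Nat.Coprime.coprime_dvd_left hpdvd hqgcd⟩
    -- all smaller primes divide W
    have hall : ∀ p : ℕ, p.Prime → p < q → p ∣ W := by
      intro p hp hplt
      have := hqmin p hplt
      push_neg at this
      have := this hp.two_le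
      exact (Nat.Prime.dvd_iff_not_coprime hp).mpr (by simpa [Nat.Coprime] using this)
    -- key bound : (e + 4q + 32)^2 < D
    have hA : (e + 4 * (q : ℤ) + 32) ^ 2 < D := by
      rcases le_or_gt q 13 with hq13 | hq13
      · -- small q : e + 4q + 32 ∈ [e, 53]
        have hq13Z : (q : ℤ) ≤ 13 := by exact_mod_cast hq13
        have hq0Z : (0 : ℤ) ≤ (q : ℤ) := by positivity
        refine sq_lt_of_between (by linarith : e ≤ e + 4 * (q : ℤ) + 32)
          (by linarith : e + 4 * (q : ℤ) + 32 ≤ 53) h0 (by norm_num; linarith : (53:ℤ) ^ 2 < D)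
      · -- q ≥ 17 prime
        have hq17 : 17 ≤ q := by
          rcases Nat.lt_or_ge q 17 with h | h
          · interval_cases q <;> exact absurd hqprime (by decide)
          · exact h
        have hcube : q ^ 3 ≤ W := primorial_bound q W hqprime hq17 hWpos hall
        have hcubeZ : (q : ℤ) ^ 3 ≤ w := by
          rw [← hWw]; exact_mod_cast hcube
        have hexp : (e - 24) ^ 2 = e ^ 2 - 48 * e + 576 := by ring
        have hwle : w ≤ -6 * e + 72 := by linarith [hlow, hw8, hexp]
        have hq0 : (0:ℤ) ≤ (q:ℤ) := by positivity
        have h17Z : (17:ℤ) ≤ (q:ℤ) := by exact_mod_cast hq17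
        have hxl : 2 * (q:ℤ) + 16 ≤ -e := by
          nlinarith [mul_le_mul_of_nonneg_right h17Z (sq_nonneg (q:ℤ)),
            mul_le_mul_of_nonneg_right h17Z hq0, hcubeZ, hwle]
        refine sq_lt_of_between (by linarith : e ≤ e + 4 * (q : ℤ) + 32)
          (by linarith : e + 4 * (q : ℤ) + 32 ≤ -e) h0 (by rw [show (-e) ^ 2 = e ^ 2 by ring]; exact h0 : (-e) ^ 2 < D)
    -- set up the two moves
    set g : ℤ := -e - 4 * (q : ℤ) with hg
    set e' : ℤ := e + 4 * (q : ℤ) - 4 with he'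
    have hq1Z : (1:ℤ) ≤ (q:ℤ) := by exact_mod_cast (by omega : 1 ≤ q)
    have he'4 : (e' + 4) ^ 2 < D := by
      have h : e' + 4 = e + 4 * (q:ℤ) := by rw [he']; ring
      rw [h]
      exact sq_lt_of_between (by linarith) (by linarith) h0 hA
    have he'0 : e' ^ 2 < D := by
      rw [he']
      exact sq_lt_of_between (by linarith : e ≤ e + 4 * (q:ℤ) - 4) (by linarith) h0 hA
    have he'S : e' ∈ SD D := by
      refine ⟨?_, he'0, he'4⟩
      have h : e' = e + 4 * ((q:ℤ) - 1) := by rw [he']; ring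
      rw [h, sq_shift]; exact h8
    have hgS : g ∈ SD D := by
      refine ⟨?_, ?_, ?_⟩
      · have h : g ^ 2 = (e + 4 * (q:ℤ)) ^ 2 := by rw [hg]; ring
        rw [h, sq_shift]; exact h8
      · have h : g ^ 2 = (e' + 4) ^ 2 := by rw [hg, he']; ring
        rw [h]; exact he'4
      · have h : (g + 4) ^ 2 = e' ^ 2 := by rw [hg, he']; ring
        rw [h]; exact he'0
    have hmove1 : SMove D e g := by
      refine ⟨⟨h8, h0, h4⟩, hgS, (q : ℤ), by exact_mod_cast (by omega : 0 < q), by rw [hg], ?_⟩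
      rw [← hw]
      have : Int.gcd (q : ℤ) w = Nat.gcd q W := by
        rw [Int.gcd, Int.natAbs_natCast]
        congr 1
        omega
      rw [this]; exact hqgcd
    have hmove2 : SMove D g e' :=
      ⟨hgS, he'S, 1, one_pos, by rw [hg, he']; ring, by simp [Int.gcd]⟩
    have hchain : Relation.EqvGen (SMove D) e e' :=
      Relation.EqvGen.trans _ _ _ (Relation.EqvGen.rel _ _ hmove1) (Relation.EqvGen.rel _ _ hmove2)
    have hA' : (e' + 36) ^ 2 < D := by
      have h : e' + 36 = e + 4 * (q:ℤ) + 32 := by rw [he']; ring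
      rw [h]; exact hA
    rcases lt_or_ge ((e' - 24) ^ 2) D with hdone | hlow'
    · exact ⟨e', mem_TD hD he'S hdone hA', hchain⟩
    · have hn31 : 31 ≤ n := by omega
      have hstep : e + 4 ≤ e' := by rw [he']; linarith
      have hcast : ((n - 1 : ℕ) : ℤ) = (n : ℤ) - 1 := by
        push_cast [Nat.cast_sub (by omega : 1 ≤ n)]; ring
      obtain ⟨f, hf, hc⟩ := IH (n - 1) (by omega) e' he'S
        (by rw [hcast]; linarith) hlow'
      exact ⟨f, hf, Relation.EqvGen.trans _ _ _ hchain hc⟩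

/-- For `D ≥ 55² = 3025`, every element of `𝒮_D` is equivalent to an element
of `𝒯_D`. -/
theorem stmt7 (D : ℤ) (hD : 3025 ≤ D) (e : ℤ) (he : e ∈ SD D) :
    ∃ f ∈ TD D, Relation.EqvGen (SMove D) e f := by
  obtain ⟨h8, h0, h4⟩ := he
  have heS : e ∈ SD D := ⟨h8, h0, h4⟩
  rcases le_or_gt D ((e - 24) ^ 2) with hlow | hok1
  · exact climb D hD (-e).toNat e heS (by linarith [Int.self_le_toNat (-e)]) hlow
  rcases le_or_gt D ((e + 36) ^ 2) with hhigh | hok2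
  · -- e is too high : flip first
    have he19 : 19 ≤ e := by
      by_contra hc
      push_neg at hc
      have hm17 : -17 ≤ e := by nlinarith
      nlinarith [mul_nonneg (by linarith : (0:ℤ) ≤ 54 - (e + 36)) (by linarith : (0:ℤ) ≤ e + 36)]
    have he1S : -e - 4 ∈ SD D := flip_mem heS
    have hm : SMove D e (-e - 4) := flip_move heS
    have h36 : (-e - 4 + 36) ^ 2 < D := by
      rw [show (-e - 4 + 36) ^ 2 = (e - 32) ^ 2 by ring]
      exact sq_lt_of_between (by linarith : (-13 : ℤ) ≤ e - 32) (by linarith : e - 32 ≤ e)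
        (by norm_num; linarith : (-13 : ℤ) ^ 2 < D) h0
    rcases le_or_gt D ((-e - 4 - 24) ^ 2) with hlow1 | hok
    · obtain ⟨f, hf, hc⟩ := climb D hD (-(-e - 4)).toNat (-e - 4) he1S
        (by linarith [Int.self_le_toNat (-(-e - 4))]) hlow1
      exact ⟨f, hf, Relation.EqvGen.trans _ _ _ (Relation.EqvGen.rel _ _ hm) hc⟩
    · exact ⟨-e - 4, mem_TD hD he1S hok h36, Relation.EqvGen.rel _ _ hm⟩
  · exact ⟨e, mem_TD hD heS hok1 hok2, Relation.EqvGen.refl e⟩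
end

section
/- Let w, h, t, e be integers with e odd. Define the 4×4 integer matrices T⁺ with rows (e,0,2w,2t), (0,e,0,2h), (h,−t,0,0), (0,w,0,0), and T⁻ with rows (e,0,w,t), (0,e,0,h), (2h,−2t,0,0), (0,2w,0,0), and the 4×4 integer matrices Ω⁺ with rows (0,1,0,0), (−1,0,0,0), (0,0,0,2), (0,0,−2,0), and Ω⁻ with rows (0,2,0,0), (−2,0,0,0), (0,0,0,1), (0,0,−1,0). Then: (1) there exist u, v ∈ ℤ⁴ such that (T⁺u)ᵀ Ω⁺ (T⁺v) is odd; (2) for all u, v ∈ ℤ⁴, the integer (T⁻u)ᵀ Ω⁻ (T⁻v) is even. -/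
open Matrix

/-- Matrix of the normalized generator of `𝒪_D` in the symplectic basis associated to a
cylinder decomposition of type `A+`. -/
def Tplus (w h t e : ℤ) : Matrix (Fin 4) (Fin 4) ℤ :=
  !![e, 0, 2*w, 2*t; 0, e, 0, 2*h; h, -t, 0, 0; 0, w, 0, 0]

/-- Matrix of the normalized generator of `𝒪_D` in the symplectic basis associated to a
cylinder decomposition of type `A-`. -/
def Tminus (w h t e : ℤ) : Matrix (Fin 4) (Fin 4) ℤ :=
  !![e, 0, w, t; 0, e, 0, h; 2*h, -2*t, 0, 0; 0, 2*w, 0, 0]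

/-- Matrix of the restriction of the intersection form in the `A+` basis. -/
def Omegaplus : Matrix (Fin 4) (Fin 4) ℤ :=
  !![0, 1, 0, 0; -1, 0, 0, 0; 0, 0, 0, 2; 0, 0, -2, 0]

/-- Matrix of the restriction of the intersection form in the `A-` basis. -/
def Omegaminus : Matrix (Fin 4) (Fin 4) ℤ :=
  !![0, 2, 0, 0; -2, 0, 0, 0; 0, 0, 0, 1; 0, 0, -1, 0]

/-- For `e` odd: (1) some value `(T⁺u)ᵀ Ω⁺ (T⁺v)` is odd; (2) every value
`(T⁻u)ᵀ Ω⁻ (T⁻v)` is even. -/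
theorem stmt15 (w h t e : ℤ) (he : Odd e) :
    (∃ u v : Fin 4 → ℤ,
      Odd ((Tplus w h t e *ᵥ u) ⬝ᵥ (Omegaplus *ᵥ (Tplus w h t e *ᵥ v)))) ∧
    (∀ u v : Fin 4 → ℤ,
      Even ((Tminus w h t e *ᵥ u) ⬝ᵥ (Omegaminus *ᵥ (Tminus w h t e *ᵥ v)))) := by
  obtain ⟨k, rfl⟩ := he
  constructor
  · refine ⟨![1,0,0,0], ![0,1,0,0], ?_⟩
    have : (Tplus w h t (2*k+1) *ᵥ ![1,0,0,0]) ⬝ᵥ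
        (Omegaplus *ᵥ (Tplus w h t (2*k+1) *ᵥ ![0,1,0,0]))
        = 2*(2*k*k + 2*k + w*h) + 1 := by
      simp [Tplus, Omegaplus, mulVec, dotProduct, Fin.sum_univ_four, Matrix.vecHead, Matrix.vecTail]
      ring
    rw [this]
    exact ⟨2*k*k + 2*k + w*h, by ring⟩
  · intro u v
    have key : (Tminus w h t (2*k+1) *ᵥ u) ⬝ᵥ
        (Omegaminus *ᵥ (Tminus w h t (2*k+1) *ᵥ v))
        = 2 * (u 0 * ((((2*k+1)*(2*k+1)+2*h*w)*v 1 + (2*k+1)*h*v 3))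
          + u 1 * (-((2*k+1)*(2*k+1)+2*h*w)*v 0 - (2*k+1)*w*v 2 - (2*k+1)*t*v 3)
          + u 2 * ((2*k+1)*w*v 1 + h*w*v 3)
          + u 3 * (-(2*k+1)*h*v 0 + (2*k+1)*t*v 1 - h*w*v 2)) := by
      simp [Tminus, Omegaminus, mulVec, dotProduct, Fin.sum_univ_four, Matrix.vecHead, Matrix.vecTail]
      ring
    rw [key]
    exact even_two_mul _
end
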